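/- arXiv:2305.12139 — 2 statements merged into one kernel-verified Lean document; each statement's English description precedes it below -/
import Mathlib

section
/- Consider the closed-loop pump pressure dynamics with state x = (J_P χ, C_P p, Q_I r) given by J_P χ̇ = −R^p χ − (p − p*), C_P ṗ = χ − r + d, Q_I ṙ = p − p*, with constants J_P, C_P, Q_I, R^p > 0. Fix any equilibrium (χ̄, p̄, r̄) with p̄ = p* and input d̄ satisfying the equilibrium equations. Then along solutions the function H = (1/2)[(J_Pχ − J_Pχ̄)²/J_P + (C_P p − C_P p̄)²/C_P + (Q_I r − Q_I r̄)²/Q_I] satisfies Ḣ = −R^p(χ − χ̄)² + (p − p̄)(d − d̄) ≤ (p − p̄)(d − d̄). -/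
theorem stmt4 (JP CP QI Rp pstar : ℝ)
    (hJP : 0 < JP) (hCP : 0 < CP) (hQI : 0 < QI) (hRp : 0 < Rp)
    (χ p r d : ℝ → ℝ) (χbar pbar rbar dbar : ℝ)
    (hdyn1 : ∀ t, HasDerivAt χ ((-Rp * χ t - (p t - pstar)) / JP) t)
    (hdyn2 : ∀ t, HasDerivAt p ((χ t - r t + d t) / CP) t)
    (hdyn3 : ∀ t, HasDerivAt r ((p t - pstar) / QI) t)
    (hpbar : pbar = pstar)
    (heq1 : -Rp * χbar - (pbar - pstar) = 0)
    (heq2 : χbar - rbar + dbar = 0)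
    (heq3 : pbar - pstar = 0) :
    ∀ t,
      HasDerivAt
        (fun t => (1/2) * (JP * (χ t - χbar)^2 + CP * (p t - pbar)^2 + QI * (r t - rbar)^2))
        (-(Rp * (χ t - χbar)^2) + (p t - pbar) * (d t - dbar)) t ∧
      -(Rp * (χ t - χbar)^2) + (p t - pbar) * (d t - dbar) ≤ (p t - pbar) * (d t - dbar) := by
  intro t
  constructor
  · have h1 := ((hdyn1 t).sub_const χbar).pow 2
    have h2 := ((hdyn2 t).sub_const pbar).pow 2
    have h3 := ((hdyn3 t).sub_const rbar).pow 2
    have := (((h1.const_mul JP).add (h2.const_mul CP)).add (h3.const_mul QI)).const_mul (1/2 : ℝ)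
    refine this.congr_deriv ?_
    have hχb : χbar = 0 := by nlinarith
    have hdb : dbar = rbar := by linarith
    field_simp
    subst hpbar hχb hdb
    ring
  · nlinarith [sq_nonneg (χ t - χbar), hRp.le]
end

section
/- Consider the closed-loop valve dynamics J q̇ = −(λ(q) − λ(q̄)) + μ̂(q) K_P ŷ − μ̂(q)(r − r̄) − r̄(μ̂(q) − μ̂(q̄)) + (d − d̄), Q_I ṙ = μ̂(q)(q − q*), where ŷ = −μ̂(q)(q − q*), λ and μ̂ are strictly increasing with λ(0) = μ̂(0) = 0, K_P, Q_I, J > 0, r̄ > 0, and q̄ = q*. Then H^v = (1/2)[(J q − J q̄)²/J + (Q_I r − Q_I r̄)²/Q_I] satisfies Ḣ^v = −(q − q̄)(λ(q) − λ(q̄)) − K_P ŷ² − r̄ (q − q̄)(μ̂(q) − μ̂(q̄)) + (q − q̄)(d − d̄) ≤ (q − q̄)(d − d̄). -/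
lemma mono_mul_nonneg {f : ℝ → ℝ} (hf : StrictMono f) (a b : ℝ) :
    0 ≤ (a - b) * (f a - f b) := by
  rcases lt_trichotomy a b with h | h | h
  · have := hf h
    nlinarith
  · simp [h]
  · have := hf h
    nlinarith

theorem stmt7 (J QI KP qstar qbar rbar : ℝ)
    (hJ : 0 < J) (hQI : 0 < QI) (hKP : 0 < KP) (hrbar : 0 < rbar)
    (hqbar : qbar = qstar)
    (lam muhat : ℝ → ℝ) (hlam : StrictMono lam) (hmu : StrictMono muhat)
    (hlam0 : lam 0 = 0) (hmu0 : muhat 0 = 0)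
    (q r d : ℝ → ℝ) (dbar : ℝ)
    (hy : ∀ t, HasDerivAt q
      ((-(lam (q t) - lam qbar)
        + muhat (q t) * KP * (-(muhat (q t)) * (q t - qstar))
        - muhat (q t) * (r t - rbar)
        - rbar * (muhat (q t) - muhat qbar)
        + (d t - dbar)) / J) t)
    (hr : ∀ t, HasDerivAt r ((muhat (q t) * (q t - qstar)) / QI) t) :
    ∀ t,
      HasDerivAt
        (fun t => (1/2) * (J * (q t - qbar)^2 + QI * (r t - rbar)^2))
        (-((q t - qbar) * (lam (q t) - lam qbar))
          - KP * (-(muhat (q t)) * (q t - qstar))^2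
          - rbar * (q t - qbar) * (muhat (q t) - muhat qbar)
          + (q t - qbar) * (d t - dbar)) t ∧
      -((q t - qbar) * (lam (q t) - lam qbar))
          - KP * (-(muhat (q t)) * (q t - qstar))^2
          - rbar * (q t - qbar) * (muhat (q t) - muhat qbar)
          + (q t - qbar) * (d t - dbar) ≤ (q t - qbar) * (d t - dbar) := by
  intro t
  constructor
  · have hq := hy t
    have hrt := hr t
    have h1 : HasDerivAt (fun t => (1/2) * (J * (q t - qbar)^2 + QI * (r t - rbar)^2))
        ((1/2) * (J * (2 * (q t - qbar) *
          ((-(lam (q t) - lam qbar)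
            + muhat (q t) * KP * (-(muhat (q t)) * (q t - qstar))
            - muhat (q t) * (r t - rbar)
            - rbar * (muhat (q t) - muhat qbar)
            + (d t - dbar)) / J))
          + QI * (2 * (r t - rbar) * ((muhat (q t) * (q t - qstar)) / QI)))) t := by
      have := (((((hq.sub_const qbar).pow 2).const_mul J).add
        (((hrt.sub_const rbar).pow 2).const_mul QI)).const_mul (1/2))
      simpa using this
    convert h1 using 1
    subst hqbar
    field_simp
    ring
  · have h1 := mono_mul_nonneg hlam (q t) qbar
    have h2 := mono_mul_nonneg hmu (q t) qbar
    nlinarith [sq_nonneg (-(muhat (q t)) * (q t - qstar)), mul_pos hKP hrbar]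
end
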